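/- arXiv:1705.07378 — 2 statements merged into one kernel-verified Lean document; each statement's English description precedes it below -/
import Mathlib

section
/- Let G be a group. Suppose g, h ∈ G have finite order and there exist a, b ∈ ℕ and f ∈ G with g^a = f h f⁻¹ and h^b conjugate to g. If the conjugacy class of h has polynomial growth with respect to the word length (i.e., |{α ∈ C(h) : ‖α‖ ≤ l}| bounded by a polynomial in l), then the conjugacy class of g also has polynomial growth. -/
/-!
Conjugating `g ^ a = f h f⁻¹` and raising to the `b`-th power shows that `g ^ (a * b)` is
conjugate to `g`, so the order of `g` is coprime to `a`. Hence `α ↦ α ^ a` is injective on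
`C(g)` (Bézout inverts it), maps `C(g)` into `C(h)`, and multiplies word length by at most `a`;
so the elements of `C(g)` of length `≤ l` are at most as many as those of `C(h)` of length
`≤ a l`.
-/

noncomputable section

/-- Word length of `g` with respect to a (symmetrized) generating set `S`. -/
def wordLength {G : Type*} [Group G] (S : Set G) (g : G) : ℕ :=
  sInf {n | ∃ l : List G, (∀ x ∈ l, x ∈ S ∨ x⁻¹ ∈ S) ∧ l.length = n ∧ l.prod = g}

/-- The conjugacy class of `g` in `G`. -/
def conjClass {G : Type*} [Group G] (g : G) : Set G := {x | IsConj g x}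

/-- A subset `T` of a group `G` with word length relative to `S` grows polynomially:
the number of elements of `T` of word length at most `l` is finite and bounded by a
polynomial in `l`. -/
def PolyGrowth {G : Type*} [Group G] (S : Set G) (T : Set G) : Prop :=
  ∃ c : ℝ, 0 < c ∧ ∃ d : ℕ, ∀ l : ℕ,
    {x ∈ T | wordLength S x ≤ l}.Finite ∧
    (({x ∈ T | wordLength S x ≤ l}).ncard : ℝ) ≤ c * (l + 1) ^ d

/-- A finitely generated group (with word length relative to `S`) is polynomially full if
the conjugacy class of every finite order element grows polynomially. -/
def PolynomiallyFull {G : Type*} [Group G] (S : Set G) : Prop :=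
  ∀ g : G, 0 < orderOf g → PolyGrowth S (conjClass g)

section WordLength

variable {G : Type*} [Group G] {S : Set G}

lemma exists_list_wordLength {x : G} (hx : x ∈ Subgroup.closure S) :
    ∃ l : List G, (∀ y ∈ l, y ∈ S ∨ y⁻¹ ∈ S) ∧ l.length = wordLength S x ∧ l.prod = x := by
  rw [← Subgroup.mem_toSubmonoid, Subgroup.closure_toSubmonoid] at hx
  obtain ⟨l, hl, hprod⟩ := Submonoid.exists_list_of_mem_closure hx
  have hne :
      {n | ∃ l : List G, (∀ y ∈ l, y ∈ S ∨ y⁻¹ ∈ S) ∧ l.length = n ∧ l.prod = x}.Nonempty :=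
    ⟨l.length, l, fun y hy => (hl y hy).imp_right Set.mem_inv.mp, rfl, hprod⟩
  exact Nat.sInf_mem hne

lemma wordLength_mul_le {x y : G} (hx : x ∈ Subgroup.closure S) (hy : y ∈ Subgroup.closure S) :
    wordLength S (x * y) ≤ wordLength S x + wordLength S y := by
  obtain ⟨l, hl, hlen, rfl⟩ := exists_list_wordLength hx
  obtain ⟨l', hl', hlen', rfl⟩ := exists_list_wordLength hy
  refine Nat.sInf_le ⟨l ++ l', ?_, by rw [List.length_append, hlen, hlen'], List.prod_append⟩
  simpa only [List.mem_append] using fun z hz => hz.elim (hl z) (hl' z)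

lemma wordLength_pow_le {x : G} (hx : x ∈ Subgroup.closure S) (a : ℕ) :
    wordLength S (x ^ a) ≤ a * wordLength S x := by
  induction a with
  | zero => rw [pow_zero, zero_mul]; exact Nat.sInf_le ⟨[], by simp, rfl, rfl⟩
  | succ a ih =>
    calc wordLength S (x ^ (a + 1))
        ≤ wordLength S (x ^ a) + wordLength S x := by
          rw [pow_succ]; exact wordLength_mul_le (pow_mem hx a) hx
      _ ≤ (a + 1) * wordLength S x := by rw [add_one_mul]; omega

end WordLength

lemma PolyGrowth.of_injOn {G H : Type*} [Group G] [Group H] {S : Set G} {S' : Set H}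
    {T : Set G} {T' : Set H} {φ : G → H} {k : ℕ} (hT' : PolyGrowth S' T')
    (hmaps : Set.MapsTo φ T T') (hinj : Set.InjOn φ T)
    (hlen : ∀ x ∈ T, wordLength S' (φ x) ≤ k * wordLength S x) : PolyGrowth S T := by
  obtain ⟨c, hc, d, hbound⟩ := hT'
  refine ⟨c * (k + 1) ^ d, by positivity, d, fun l => ?_⟩
  obtain ⟨hfin', hcard'⟩ := hbound (k * l)
  have hmaps' :
      Set.MapsTo φ {x ∈ T | wordLength S x ≤ l} {y ∈ T' | wordLength S' y ≤ k * l} :=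
    fun x hx => ⟨hmaps hx.1, (hlen x hx.1).trans (Nat.mul_le_mul_left k hx.2)⟩
  have hinj' : Set.InjOn φ {x ∈ T | wordLength S x ≤ l} := hinj.mono (Set.sep_subset T _)
  have hfin := Set.Finite.of_finite_image (hfin'.subset (hmaps'.image_subset)) hinj'
  refine ⟨hfin, ?_⟩
  have hlin : ((k * l : ℕ) + 1 : ℝ) ≤ (k + 1) * (l + 1) := by
    push_cast; nlinarith [Nat.cast_nonneg (α := ℝ) k, Nat.cast_nonneg (α := ℝ) l]
  calc (({x ∈ T | wordLength S x ≤ l}).ncard : ℝ)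
      ≤ ({y ∈ T' | wordLength S' y ≤ k * l}).ncard := by
        exact_mod_cast Set.ncard_le_ncard_of_injOn φ hmaps' hinj' hfin'
    _ ≤ c * ((k * l : ℕ) + 1) ^ d := hcard'
    _ ≤ c * ((k + 1) * (l + 1)) ^ d := by gcongr
    _ = c * (k + 1) ^ d * (l + 1) ^ d := by rw [mul_pow, mul_assoc]

section Order

variable {G : Type*} [Group G]

lemma IsConj.orderOf_eq {x y : G} (h : IsConj x y) : orderOf x = orderOf y := by
  obtain ⟨c, hc⟩ := h
  exact hc.orderOf_eq

lemma coprime_orderOf_of_isConj_pow {g : G} {k : ℕ} (hg : 0 < orderOf g)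
    (h : IsConj g (g ^ k)) : (orderOf g).Coprime k := by
  have hdiv : orderOf g / (orderOf g).gcd k = orderOf g := by
    rw [← (orderOf_pos_iff.mp hg).orderOf_pow g k, ← h.orderOf_eq]
  exact (Nat.div_eq_self.mp hdiv).resolve_left hg.ne'

-- `gcdA a (orderOf x)` inverts `a` modulo `orderOf x` (Bézout).
lemma pow_zpow_gcdA_of_coprime {x : G} {a : ℕ} (h : a.Coprime (orderOf x)) :
    (x ^ a) ^ Nat.gcdA a (orderOf x) = x := by
  calc (x ^ a) ^ Nat.gcdA a (orderOf x)
      = (x ^ a) ^ Nat.gcdA a (orderOf x) * (x ^ orderOf x) ^ Nat.gcdB a (orderOf x) := by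
        rw [pow_orderOf_eq_one, one_zpow, mul_one]
    _ = x ^ ((a.gcd (orderOf x) : ℕ) : ℤ) := by
        rw [Nat.gcd_eq_gcd_ab, zpow_add, zpow_mul, zpow_mul, zpow_natCast, zpow_natCast]
    _ = x := by rw [h.gcd_eq_one, Nat.cast_one, zpow_one]

lemma pow_injOn_coprime_orderOf (a : ℕ) :
    Set.InjOn (· ^ a) {x : G | (orderOf x).Coprime a} := by
  intro x hx y hy hxy
  have horder : orderOf x = orderOf y := by
    rw [← Nat.Coprime.orderOf_pow hx, ← Nat.Coprime.orderOf_pow hy]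
    exact congrArg orderOf hxy
  rw [← pow_zpow_gcdA_of_coprime hx.symm, ← pow_zpow_gcdA_of_coprime hy.symm, horder]
  exact congrArg (· ^ Nat.gcdA a (orderOf y)) hxy

end Order

theorem stmt11_general {G : Type*} [Group G] (S : Finset G)
    (hS : Subgroup.closure (S : Set G) = ⊤)
    (g h : G) (hg : 0 < orderOf g)
    (a b : ℕ) (f : G) (hga : g ^ a = f * h * f⁻¹) (hhb : IsConj g (h ^ b))
    (hpol : PolyGrowth (S : Set G) (conjClass h)) :
    PolyGrowth (S : Set G) (conjClass g) := by
  have hgah : IsConj (g ^ a) h := isConj_iff.mpr ⟨f⁻¹, by rw [hga]; group⟩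
  have hgab : IsConj g (g ^ (a * b)) := pow_mul g a b ▸ hhb.trans (hgah.pow b).symm
  have hcop : (orderOf g).Coprime a :=
    (coprime_orderOf_of_isConj_pow hg hgab).coprime_mul_right_right
  have hmaps : Set.MapsTo (· ^ a) (conjClass g) (conjClass h) :=
    fun α hα => hgah.symm.trans (hα.pow a)
  have hinj : Set.InjOn (· ^ a) (conjClass g) :=
    (pow_injOn_coprime_orderOf a).mono fun α hα => show (orderOf α).Coprime a by
      rwa [← IsConj.orderOf_eq hα]
  exact hpol.of_injOn hmaps hinj fun α _ => wordLength_pow_le (hS ▸ Subgroup.mem_top α) a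

/-- Let `G` be finitely generated by `S`. If `g, h` have finite order with
`g ^ a = f h f⁻¹` and `h ^ b` conjugate to `g` for some `a, b ∈ ℕ`, `f ∈ G`, and the
conjugacy class of `h` has polynomial growth, then so does the conjugacy class of `g`. -/
theorem stmt11 {G : Type*} [Group G] (S : Finset G)
    (hS : Subgroup.closure (S : Set G) = ⊤)
    (g h : G) (hg : 0 < orderOf g) (hh : 0 < orderOf h)
    (a b : ℕ) (f : G) (hga : g ^ a = f * h * f⁻¹) (hhb : IsConj g (h ^ b))
    (hpol : PolyGrowth (S : Set G) (conjClass h)) :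
    PolyGrowth (S : Set G) (conjClass g) :=
  stmt11_general S hS g h hg a b f hga hhb hpol
end
end

section
/- In the finite abelian group G = ℤ/n₁ × ⋯ × ℤ/n_k, the number of equivalence classes under the relation g ∼fin h (g and h generate the same cyclic subgroup, i.e., ∃ a with g^a = h and ∃ b with h^b = g) equals ∑_{d₁|n₁} ⋯ ∑_{d_k|n_k} φ(d₁)⋯φ(d_k)/φ(lcm(d₁,…,d_k)). -/
open Finset AddSubgroup

section Aux

variable {G : Type*} [AddCommGroup G] [Fintype G]

private lemma exists_nsmul_iff (x y : G) : (∃ a : ℕ, a • x = y) ↔ y ∈ zmultiples x := by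
  rw [← mem_multiples_iff_mem_zmultiples, AddSubmonoid.mem_multiples_iff]

private lemma rel_iff (x y : G) :
    ((∃ a : ℕ, a • x = y) ∧ (∃ b : ℕ, b • y = x)) ↔ zmultiples y = zmultiples x := by
  rw [exists_nsmul_iff, exists_nsmul_iff]
  constructor
  · rintro ⟨h1, h2⟩
    exact le_antisymm (zmultiples_le.2 h1) (zmultiples_le.2 h2)
  · intro h
    exact ⟨h ▸ mem_zmultiples y, h.symm ▸ mem_zmultiples x⟩

private instance zmultiples_isAddCyclic (x : G) : IsAddCyclic (zmultiples x) := by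
  refine ⟨⟨⟨x, mem_zmultiples x⟩, fun h => ?_⟩⟩
  obtain ⟨c, hc⟩ := mem_zmultiples_iff.mp h.2
  exact ⟨c, Subtype.ext hc⟩

private lemma zmultiples_eq_iff (x y : G) :
    zmultiples y = zmultiples x ↔ y ∈ zmultiples x ∧ addOrderOf y = addOrderOf x := by
  constructor
  · intro h
    refine ⟨h ▸ mem_zmultiples y, ?_⟩
    rw [← Nat.card_zmultiples, ← Nat.card_zmultiples, h]
  · rintro ⟨h1, h2⟩
    refine AddSubgroup.eq_of_le_of_card_ge (zmultiples_le.2 h1) ?_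
    rw [Nat.card_zmultiples, Nat.card_zmultiples]
    exact h2.ge

open Classical in
private lemma card_class (x : G) :
    #{y : G | zmultiples y = zmultiples x} = (addOrderOf x).totient := by
  classical
  have hcard : Fintype.card (zmultiples x) = addOrderOf x := by
    rw [← Nat.card_eq_fintype_card, Nat.card_zmultiples]
  have htot : #{h : zmultiples x | addOrderOf h = addOrderOf x} = (addOrderOf x).totient := by
    have := IsAddCyclic.card_addOrderOf_eq_totient (α := zmultiples x) (d := addOrderOf x)
      (by rw [hcard])
    simpa using this
  rw [← htot]
  refine Finset.card_bij (fun y hy => (⟨y, ?_⟩ : zmultiples x)) ?_ ?_ ?_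
  · simp only [mem_filter, mem_univ, true_and] at hy
    exact ((zmultiples_eq_iff x y).mp hy).1
  · intro y hy
    simp only [mem_filter, mem_univ, true_and] at hy ⊢
    rw [AddSubgroup.addOrderOf_mk]
    exact ((zmultiples_eq_iff x y).mp hy).2
  · intro y1 h1 y2 h2 h
    exact congrArg Subtype.val h
  · intro h hh
    simp only [mem_filter, mem_univ, true_and] at hh ⊢
    refine ⟨(h : G), ?_, rfl⟩
    rw [zmultiples_eq_iff]
    exact ⟨h.2, by rw [AddSubgroup.addOrderOf_coe, hh]⟩

private lemma quot_card_eq :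
    (Nat.card (Quot (fun x y : G =>
        (∃ a : ℕ, a • x = y) ∧ (∃ b : ℕ, b • y = x))) : ℚ) =
      ∑ x : G, 1 / ((addOrderOf x).totient : ℚ) := by
  classical
  set r := fun x y : G => (∃ a : ℕ, a • x = y) ∧ (∃ b : ℕ, b • y = x) with hr
  have hequiv : Equivalence r := by
    constructor
    · intro x; exact (rel_iff x x).mpr rfl
    · intro x y h; exact (rel_iff y x).mpr ((rel_iff x y).mp h).symm
    · intro x y z h1 h2
      exact (rel_iff x z).mpr (((rel_iff y z).mp h2).trans ((rel_iff x y).mp h1))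
  have : Finite (Quot r) := Quot.finite r
  letI : Fintype (Quot r) := Fintype.ofFinite _
  rw [Nat.card_eq_fintype_card]
  have h1 : (Fintype.card (Quot r) : ℚ) = ∑ _q : Quot r, (1 : ℚ) := by simp
  rw [h1, ← Finset.sum_fiberwise_of_maps_to
    (g := Quot.mk r) (t := Finset.univ) (fun x _ => mem_univ _)
    (fun x => 1 / ((addOrderOf x).totient : ℚ))]
  refine Finset.sum_congr rfl fun q _ => ?_
  obtain ⟨x0, rfl⟩ := Quot.exists_rep q
  have hfib : Finset.filter (fun y : G => Quot.mk r y = Quot.mk r x0) Finset.univ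
      = Finset.filter (fun y : G => zmultiples y = zmultiples x0) Finset.univ := by
    ext y
    simp only [mem_filter, mem_univ, true_and]
    rw [Quot.eq, hequiv.eqvGen_iff]
    show ((∃ a : ℕ, a • y = x0) ∧ (∃ b : ℕ, b • x0 = y)) ↔ _
    rw [rel_iff y x0]
    exact eq_comm
  rw [hfib]
  have hall : ∀ y ∈ Finset.filter (fun y : G => zmultiples y = zmultiples x0) Finset.univ,
      1 / ((addOrderOf y).totient : ℚ) = 1 / ((addOrderOf x0).totient : ℚ) := by
    intro y hy
    simp only [mem_filter, mem_univ, true_and] at hy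
    rw [((zmultiples_eq_iff x0 y).mp hy).2]
  rw [Finset.sum_congr rfl hall, Finset.sum_const, card_class x0, nsmul_eq_mul]
  have hpos : (0 : ℚ) < ((addOrderOf x0).totient : ℚ) := by
    exact_mod_cast Nat.totient_pos.mpr (addOrderOf_pos x0)
  field_simp

private lemma addOrderOf_pi {ι : Type*} [Fintype ι] {M : ι → Type*}
    [∀ i, AddGroup (M i)] [∀ i, Finite (M i)] (x : ∀ i, M i) :
    addOrderOf x = Finset.univ.lcm fun i => addOrderOf (x i) := by
  apply Nat.dvd_antisymm
  · rw [addOrderOf_dvd_iff_nsmul_eq_zero]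
    funext i
    exact addOrderOf_dvd_iff_nsmul_eq_zero.mp (Finset.dvd_lcm (mem_univ i))
  · refine Finset.lcm_dvd fun i _ => ?_
    rw [addOrderOf_dvd_iff_nsmul_eq_zero]
    exact congrFun (addOrderOf_nsmul_eq_zero x) i

end Aux

/-- In the finite abelian group `G = ℤ/n₁ × ⋯ × ℤ/n_k`, the number of
equivalence classes of the relation `g ∼fin h ↔ (∃ a, g^a = h) ∧ (∃ b, h^b = g)`
(written additively) equals
`∑_{d₁|n₁} ⋯ ∑_{d_k|n_k} φ(d₁)⋯φ(d_k)/φ(lcm(d₁,…,d_k))`. -/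
theorem stmt17 (k : ℕ) (n : Fin k → ℕ) (hn : ∀ i, 0 < n i) :
    (Nat.card (Quot (fun x y : ∀ i, ZMod (n i) =>
        (∃ a : ℕ, a • x = y) ∧ (∃ b : ℕ, b • y = x))) : ℚ) =
    ∑ d ∈ Fintype.piFinset (fun i => (n i).divisors),
      (∏ i, (Nat.totient (d i) : ℚ)) / (Nat.totient (Finset.univ.lcm d) : ℚ) := by
  classical
  haveI : ∀ i, NeZero (n i) := fun i => ⟨(hn i).ne'⟩
  rw [quot_card_eq]
  rw [← Finset.sum_fiberwise_of_maps_to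
    (g := fun x : ∀ i, ZMod (n i) => fun i => addOrderOf (x i))
    (t := Fintype.piFinset fun i => (n i).divisors)
    (fun x _ => by
      rw [Fintype.mem_piFinset]
      intro i
      rw [Nat.mem_divisors]
      exact ⟨by have h := (addOrderOf_dvd_card : addOrderOf (x i) ∣ _); rwa [ZMod.card] at h, (hn i).ne'⟩)
    (fun x => 1 / ((addOrderOf x).totient : ℚ))]
  refine Finset.sum_congr rfl fun d hd => ?_
  have horder : ∀ x ∈ Finset.filter (fun x : ∀ i, ZMod (n i) => (fun i => addOrderOf (x i)) = d) Finset.univ,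
      1 / ((addOrderOf x).totient : ℚ)
        = 1 / ((Nat.totient (Finset.univ.lcm d)) : ℚ) := by
    intro x hx
    simp only [mem_filter, mem_univ, true_and] at hx
    rw [addOrderOf_pi, hx]
  rw [Finset.sum_congr rfl horder, Finset.sum_const, nsmul_eq_mul]
  have hfib : Finset.filter (fun x : ∀ i, ZMod (n i) => (fun i => addOrderOf (x i)) = d) Finset.univ
      = Fintype.piFinset fun i => Finset.filter (fun a : ZMod (n i) => addOrderOf a = d i) Finset.univ := by
    ext x
    simp [Fintype.mem_piFinset, funext_iff]
  rw [hfib, Fintype.card_piFinset]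
  have hcard : ∀ i, #{a : ZMod (n i) | addOrderOf a = d i} = (d i).totient := by
    intro i
    refine IsAddCyclic.card_addOrderOf_eq_totient ?_
    rw [ZMod.card]
    exact (Nat.mem_divisors.mp ((Fintype.mem_piFinset).mp hd i)).1
  simp_rw [hcard]
  push_cast
  rw [mul_one_div]
end
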